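/- arXiv:2405.20127 — 4 statements merged into one kernel-verified Lean document; each statement's English description precedes it below -/
import Mathlib

section
/- Let x_{k+1}, x_k, g_k, ∇f(x_k), ∇f(x_{k+1}) ∈ ℝ^d and γ > 0, δ ≥ 0 satisfy x_{k+1} - x_k = γ(∇f_ξ(x_{k+1}) + g_k - ∇f_ξ(x_k)) (the exact proximal point stationarity equation with shift) where ‖∇f_ξ(x_{k+1}) - ∇f(x_{k+1}) - ∇f_ξ(x_k) + ∇f(x_k)‖ ≤ δ‖x_{k+1} - x_k‖. If γ²δ² ≤ 1/16, then ‖x_{k+1} - x_k‖² ≥ (γ²/4)‖∇f(x_{k+1})‖² − γ²‖g_k − ∇f(x_k)‖². -/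
lemma aux_arith (A B S : ℝ) (hA : 0 ≤ A) (hB : 0 ≤ B) (hS : 0 ≤ S)
    (h : A - B ≤ (5 / 4) * S) : S ^ 2 ≥ A ^ 2 / 4 - B ^ 2 := by
  rcases le_or_gt A (2 * B) with h2 | h2
  · nlinarith [sq_nonneg S]
  · have h3 : 0 < A - B := by linarith
    nlinarith [sq_nonneg (39 * A - 64 * B), sq_nonneg B,
      mul_le_mul h h h3.le (by linarith : (0:ℝ) ≤ (5/4)*S)]

set_option maxHeartbeats 1000000 in
theorem step_lower_bound_exact {d : ℕ}
    (f fξ : EuclideanSpace ℝ (Fin d) → ℝ)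
    (hf : Differentiable ℝ f) (hfξ : Differentiable ℝ fξ)
    (xk xk1 gk : EuclideanSpace ℝ (Fin d)) (γ δ : ℝ) (hγ : 0 < γ) (hδ : 0 ≤ δ)
    (hstep : xk1 - xk = γ • (gradient fξ xk1 + gk - gradient fξ xk))
    (hsim : ‖gradient fξ xk1 - gradient f xk1 - gradient fξ xk + gradient f xk‖
      ≤ δ * ‖xk1 - xk‖)
    (hγδ : γ ^ 2 * δ ^ 2 ≤ 1 / 16) :
    ‖xk1 - xk‖ ^ 2 ≥ (γ ^ 2 / 4) * ‖gradient f xk1‖ ^ 2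
      - γ ^ 2 * ‖gk - gradient f xk‖ ^ 2 := by
  set a := gradient f xk1 with ha
  set b := gk - gradient f xk with hb
  set e := gradient fξ xk1 - gradient f xk1 - gradient fξ xk + gradient f xk with he
  have hv : gradient fξ xk1 + gk - gradient fξ xk = a + b + e := by
    rw [ha, hb, he]; abel
  have hS : ‖xk1 - xk‖ = γ * ‖a + b + e‖ := by
    rw [hstep, hv, norm_smul, Real.norm_eq_abs, abs_of_pos hγ]
  have htri : ‖a‖ ≤ ‖a + b + e‖ + ‖b‖ + ‖e‖ := by
    have h0 : a = (a + b + e) - b - e := by abel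
    calc ‖a‖ = ‖(a + b + e) - b - e‖ := by rw [← h0]
    _ ≤ ‖(a + b + e) - b‖ + ‖e‖ := norm_sub_le _ _
    _ ≤ ‖a + b + e‖ + ‖b‖ + ‖e‖ := by
        have := norm_sub_le (a + b + e) b
        linarith
  have hS0 : 0 ≤ ‖xk1 - xk‖ := norm_nonneg _
  have ha0 : 0 ≤ ‖a‖ := norm_nonneg _
  have hb0 : 0 ≤ ‖b‖ := norm_nonneg _
  have hγδ' : γ * δ ≤ 1 / 4 := by nlinarith
  have hkey : γ * ‖a‖ - γ * ‖b‖ ≤ (1 + γ * δ) * ‖xk1 - xk‖ := by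
    have h1 : γ * ‖a‖ ≤ γ * (‖a + b + e‖ + ‖b‖ + ‖e‖) :=
      mul_le_mul_of_nonneg_left htri hγ.le
    have h2 : γ * ‖e‖ ≤ γ * (δ * ‖xk1 - xk‖) :=
      mul_le_mul_of_nonneg_left hsim hγ.le
    rw [mul_add, mul_add] at h1
    rw [← mul_assoc] at h2
    linarith [hS, add_mul 1 (γ * δ) ‖xk1 - xk‖, mul_assoc γ δ ‖xk1 - xk‖]
  have hkey2 : γ * ‖a‖ - γ * ‖b‖ ≤ (5 / 4) * ‖xk1 - xk‖ := by
    have := mul_le_mul_of_nonneg_right hγδ' hS0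
    nlinarith
  have := aux_arith (γ * ‖a‖) (γ * ‖b‖) (‖xk1 - xk‖)
    (by positivity) (by positivity) hS0 hkey2
  have hr : (γ * ‖a‖) ^ 2 / 4 - (γ * ‖b‖) ^ 2
      = γ ^ 2 / 4 * ‖a‖ ^ 2 - γ ^ 2 * ‖b‖ ^ 2 := by ring
  linarith [this, hr.symm.le]
end

section
/- Suppose x_{k+1} satisfies the approximate stationarity x_{k+1} − x_k = γ(∇f_ξ(x_{k+1}) + g_k − ∇f_ξ(x_k) − r) with residual ‖r‖ ≤ ε, and the similarity bound ‖∇f_ξ(x_{k+1}) − ∇f(x_{k+1}) − ∇f_ξ(x_k) + ∇f(x_k)‖ ≤ δ‖x_{k+1} − x_k‖ holds with γ²δ² ≤ 1/16. Then ‖x_{k+1} − x_k‖² ≥ (γ²/5)‖∇f(x_{k+1})‖² − γ²‖g_k − ∇f(x_k)‖² − γ²ε². -/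
theorem step_lower_bound_inexact {d : ℕ}
    (f fξ : EuclideanSpace ℝ (Fin d) → ℝ)
    (hf : Differentiable ℝ f) (hfξ : Differentiable ℝ fξ)
    (xk xk1 gk r : EuclideanSpace ℝ (Fin d)) (γ δ ε : ℝ)
    (hγ : 0 < γ) (hδ : 0 ≤ δ) (hε : 0 ≤ ε)
    (hstep : xk1 - xk = γ • (gradient fξ xk1 + gk - gradient fξ xk - r))
    (hr : ‖r‖ ≤ ε)
    (hsim : ‖gradient fξ xk1 - gradient f xk1 - gradient fξ xk + gradient f xk‖
      ≤ δ * ‖xk1 - xk‖)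
    (hγδ : γ ^ 2 * δ ^ 2 ≤ 1 / 16) :
    ‖xk1 - xk‖ ^ 2 ≥ (γ ^ 2 / 5) * ‖gradient f xk1‖ ^ 2
      - γ ^ 2 * ‖gk - gradient f xk‖ ^ 2 - γ ^ 2 * ε ^ 2 := by
  set v := gradient fξ xk1 + gk - gradient fξ xk - r with hv
  set D := gradient fξ xk1 - gradient f xk1 - gradient fξ xk + gradient f xk with hD
  have h1 : ‖xk1 - xk‖ = γ * ‖v‖ := by
    rw [hstep, norm_smul, Real.norm_eq_abs, abs_of_pos hγ]
  have h2 : ‖gradient f xk1‖ ≤ ‖v‖ + ‖D‖ + ‖gk - gradient f xk‖ + ‖r‖ := by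
    have heq : gradient f xk1 = v - D - (gk - gradient f xk) + r := by
      rw [hv, hD]; abel
    calc ‖gradient f xk1‖ = ‖v - D - (gk - gradient f xk) + r‖ := by rw [heq]
      _ ≤ ‖v - D - (gk - gradient f xk)‖ + ‖r‖ := norm_add_le _ _
      _ ≤ ‖v - D‖ + ‖gk - gradient f xk‖ + ‖r‖ := by
          gcongr; exact norm_sub_le _ _
      _ ≤ ‖v‖ + ‖D‖ + ‖gk - gradient f xk‖ + ‖r‖ := by
          gcongr; exact norm_sub_le _ _
  have key : γ * ‖gradient f xk1‖ ≤
      ‖xk1 - xk‖ + γ * (δ * ‖xk1 - xk‖) + γ * ‖gk - gradient f xk‖ + γ * ε := by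
    have := mul_le_mul_of_nonneg_left h2 hγ.le
    nlinarith [mul_le_mul_of_nonneg_left hsim hγ.le,
      mul_le_mul_of_nonneg_left hr hγ.le]
  have hδγ : γ * δ ≤ 1 / 4 := by nlinarith [mul_nonneg hγ.le hδ]
  have ht : (0:ℝ) ≤ ‖xk1 - xk‖ := norm_nonneg _
  have ha : (0:ℝ) ≤ ‖gradient f xk1‖ := norm_nonneg _
  have hb : (0:ℝ) ≤ ‖gk - gradient f xk‖ := norm_nonneg _
  nlinarith [sq_nonneg (‖xk1 - xk‖ - γ * ‖gk - gradient f xk‖),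
    sq_nonneg (‖xk1 - xk‖ - γ * ε),
    sq_nonneg (γ * ‖gk - gradient f xk‖ - γ * ε),
    mul_le_mul key key (by positivity) (by positivity),
    mul_nonneg hγ.le hε, mul_nonneg hγ.le hb,
    mul_nonneg (mul_nonneg hγ.le hδ) ht, sq_nonneg ‖xk1 - xk‖,
    mul_le_mul_of_nonneg_right hδγ ht]
end

section
/- Let f, f_ξ : ℝ^d → ℝ be continuously differentiable, bounded below by f_inf, with Hessian similarity parameter δ ≥ 0 between f_ξ and f, and let γ ≤ 1/(4δ). Suppose x⁺ minimizes y ↦ f_ξ(y) + ⟨g − ∇f_ξ(x), y − x⟩ + (1/(2γ))‖y − x‖². Then f(x⁺) − f_inf ≤ f(x) − f_inf − (1/(4γ))‖x⁺ − x‖² + 2γ‖∇f(x) − g‖². -/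
/-!
Along the segment from `x` to `x⁺`, the gap `f - fξ` has a `δ`-Lipschitz gradient, so it is
majorised by its first-order expansion plus `δ/2 ‖x⁺ - x‖²`. Comparing the subproblem's value at
`x⁺` with its value at `x` bounds `fξ(x⁺)`; adding the two estimates leaves the cross term
`⟪∇f(x) - g, x⁺ - x⟫`, which Young's inequality splits into `2γ‖∇f(x) - g‖²` and
`‖x⁺ - x‖² / (8γ)`. The condition `4γδ ≤ 1` is exactly what makes the remaining quadratic
coefficient at most `-1/(4γ)`.
-/

open Set RealInnerProductSpace

theorem le_add_deriv_add_of_deriv_sub_le {φ φ' : ℝ → ℝ} {K : ℝ}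
    (hφ : ∀ t, HasDerivAt φ (φ' t) t) (hK : ∀ t ∈ Ioo (0 : ℝ) 1, φ' t - φ' 0 ≤ K * t) :
    φ 1 ≤ φ 0 + φ' 0 + K / 2 := by
  let ψ t := φ t - t * φ' 0 - K / 2 * t ^ 2
  have hψ : ∀ t, HasDerivAt ψ (φ' t - φ' 0 - K * t) t := fun t => by
    have := ((hφ t).sub ((hasDerivAt_id' t).mul_const (φ' 0))).sub
      ((hasDerivAt_pow 2 t).const_mul (K / 2))
    exact this.congr_deriv (by ring)
  have hanti : AntitoneOn ψ (Icc 0 1) :=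
    antitoneOn_of_hasDerivWithinAt_nonpos (convex_Icc 0 1)
      (HasDerivAt.continuousOn fun t _ => hψ t) (fun t _ => (hψ t).hasDerivWithinAt)
      (fun t ht => by rw [interior_Icc] at ht; linarith [hK t ht])
  have := hanti (left_mem_Icc.2 zero_le_one) (right_mem_Icc.2 zero_le_one) zero_le_one
  simp only [ψ] at this
  linarith

section InnerProductSpace

variable {E : Type*} [NormedAddCommGroup E] [InnerProductSpace ℝ E]

theorem HasGradientAt.sub [CompleteSpace E] {f g : E → ℝ} {f' g' x : E}
    (hf : HasGradientAt f f' x) (hg : HasGradientAt g g' x) :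
    HasGradientAt (fun z => f z - g z) (f' - g') x := by
  rw [hasGradientAt_iff_hasFDerivAt, map_sub]
  exact hf.hasFDerivAt.sub hg.hasFDerivAt

theorem le_add_inner_add_sq_of_lipschitz_gradient [CompleteSpace E]
    {h : E → ℝ} {h' : E → E} {L : ℝ}
    (hh : ∀ z, HasGradientAt h (h' z) z) (hL : ∀ u v, ‖h' u - h' v‖ ≤ L * ‖u - v‖) (a b : E) :
    h b ≤ h a + ⟪h' a, b - a⟫ + L / 2 * ‖b - a‖ ^ 2 := by
  set s := b - a
  have hline : ∀ t : ℝ, HasDerivAt (fun t : ℝ => h (a + t • s)) ⟪h' (a + t • s), s⟫ t := by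
    intro t
    have hpath : HasDerivAt (fun t : ℝ => a + t • s) s t := by
      simpa using ((hasDerivAt_id t).smul_const s).const_add a
    simpa [Function.comp_def] using (hh (a + t • s)).hasFDerivAt.comp_hasDerivAt t hpath
  have hslope : ∀ t ∈ Ioo (0 : ℝ) 1,
      ⟪h' (a + t • s), s⟫ - ⟪h' (a + (0 : ℝ) • s), s⟫ ≤ L * ‖s‖ ^ 2 * t := by
    intro t ht
    calc ⟪h' (a + t • s), s⟫ - ⟪h' (a + (0 : ℝ) • s), s⟫
        = ⟪h' (a + t • s) - h' a, s⟫ := by rw [zero_smul, add_zero, inner_sub_left]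
      _ ≤ ‖h' (a + t • s) - h' a‖ * ‖s‖ := real_inner_le_norm _ _
      _ ≤ L * ‖a + t • s - a‖ * ‖s‖ := by gcongr; exact hL _ _
      _ = L * ‖s‖ ^ 2 * t := by
        rw [add_sub_cancel_left, norm_smul, Real.norm_of_nonneg ht.1.le]; ring
  have := le_add_deriv_add_of_deriv_sub_le hline hslope
  simp only [zero_smul, one_smul, add_zero, s, add_sub_cancel] at this
  linarith

theorem real_inner_le_mul_norm_sq_add_norm_sq_div {c : ℝ} (hc : 0 < c) (u v : E) :
    ⟪u, v⟫ ≤ c * ‖u‖ ^ 2 + ‖v‖ ^ 2 / (4 * c) := by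
  have hamgm : ‖u‖ * ‖v‖ ≤ c * ‖u‖ ^ 2 + ‖v‖ ^ 2 / (4 * c) := by
    rw [← sub_nonneg]
    have hsq : c * ‖u‖ ^ 2 + ‖v‖ ^ 2 / (4 * c) - ‖u‖ * ‖v‖
        = (2 * c * ‖u‖ - ‖v‖) ^ 2 / (4 * c) := by
      field_simp
      ring
    rw [hsq]
    positivity
  exact (real_inner_le_norm u v).trans hamgm

end InnerProductSpace

theorem spam_descent_lemma_general {d : ℕ}
    (f fξ : EuclideanSpace ℝ (Fin d) → ℝ) (finf : ℝ)
    (hf : ContDiff ℝ 1 f) (hfξ : ContDiff ℝ 1 fξ)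
    (δ γ : ℝ) (hγ : 0 < γ) (hγδ : 4 * γ * δ ≤ 1)
    (hsim : ∀ u v : EuclideanSpace ℝ (Fin d),
      ‖gradient fξ u - gradient f u - gradient fξ v + gradient f v‖ ≤ δ * ‖u - v‖)
    (x g xplus : EuclideanSpace ℝ (Fin d))
    (hmin : ∀ y : EuclideanSpace ℝ (Fin d),
      fξ xplus + ⟪g - gradient fξ x, xplus - x⟫ + (1 / (2 * γ)) * ‖xplus - x‖ ^ 2
        ≤ fξ y + ⟪g - gradient fξ x, y - x⟫ + (1 / (2 * γ)) * ‖y - x‖ ^ 2) :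
    f xplus - finf ≤ f x - finf - (1 / (4 * γ)) * ‖xplus - x‖ ^ 2
      + 2 * γ * ‖gradient f x - g‖ ^ 2 := by
  have hgrad : ∀ z, HasGradientAt (fun z => f z - fξ z) (gradient f z - gradient fξ z) z :=
    fun z => ((hf.differentiable one_ne_zero z).hasGradientAt).sub
      (hfξ.differentiable one_ne_zero z).hasGradientAt
  have hlip : ∀ u v, ‖(gradient f u - gradient fξ u) - (gradient f v - gradient fξ v)‖
      ≤ δ * ‖u - v‖ := fun u v => by
    convert hsim u v using 1
    rw [← norm_neg]
    congr 1
    abel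
  have hgap := le_add_inner_add_sq_of_lipschitz_gradient hgrad hlip x xplus
  have hprox :
      fξ xplus + ⟪g - gradient fξ x, xplus - x⟫ + 1 / (2 * γ) * ‖xplus - x‖ ^ 2 ≤ fξ x := by
    simpa using hmin x
  have hyoung := real_inner_le_mul_norm_sq_add_norm_sq_div (mul_pos two_pos hγ)
    (gradient f x - g) (xplus - x)
  set S := ‖xplus - x‖ ^ 2
  have hcoef : δ / 2 * S + S / (4 * (2 * γ)) ≤ 1 / (2 * γ) * S - 1 / (4 * γ) * S := by
    have hδ : δ / 2 ≤ 1 / (8 * γ) := by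
      rw [le_div_iff₀ (by positivity)]
      linarith
    have hsplit :
        1 / (2 * γ) * S - 1 / (4 * γ) * S - S / (4 * (2 * γ)) = 1 / (8 * γ) * S := by
      field_simp
      ring
    linarith [mul_le_mul_of_nonneg_right hδ (by positivity : (0 : ℝ) ≤ S)]
  simp only [inner_sub_left] at hprox hgap hyoung
  linarith

theorem spam_descent_lemma {d : ℕ}
    (f fξ : EuclideanSpace ℝ (Fin d) → ℝ) (finf : ℝ)
    (hf : ContDiff ℝ 1 f) (hfξ : ContDiff ℝ 1 fξ)
    (hbdd : ∀ z, finf ≤ f z)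
    (δ γ : ℝ) (hδ : 0 ≤ δ) (hγ : 0 < γ) (hγδ : 4 * γ * δ ≤ 1)
    (hsim : ∀ u v : EuclideanSpace ℝ (Fin d),
      ‖gradient fξ u - gradient f u - gradient fξ v + gradient f v‖ ≤ δ * ‖u - v‖)
    (x g xplus : EuclideanSpace ℝ (Fin d))
    (hmin : ∀ y : EuclideanSpace ℝ (Fin d),
      fξ xplus + ⟪g - gradient fξ x, xplus - x⟫ + (1 / (2 * γ)) * ‖xplus - x‖ ^ 2
        ≤ fξ y + ⟪g - gradient fξ x, y - x⟫ + (1 / (2 * γ)) * ‖y - x‖ ^ 2) :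
    f xplus - finf ≤ f x - finf - (1 / (4 * γ)) * ‖xplus - x‖ ^ 2
      + 2 * γ * ‖gradient f x - g‖ ^ 2 :=
  spam_descent_lemma_general f fξ finf hf hfξ δ γ hγ hγδ hsim x g xplus hmin
end

section
/- Let ξ be a random variable, x, x' ∈ ℝ^d fixed, g ∈ ℝ^d fixed, p ∈ [0,1], and define g' = ∇f_ξ(x') + (1−p)(g − ∇f_ξ(x)). Assume E[∇f_ξ(z)] = ∇f(z) for every z, E‖∇f_ξ(z) − ∇f(z)‖² ≤ σ² for every z, and ‖∇f_ξ(u) − ∇f(u) − ∇f_ξ(v) + ∇f(v)‖ ≤ δ‖u − v‖ almost surely. Then E‖g' − ∇f(x')‖² ≤ (1−p)²‖g − ∇f(x)‖² + 2(1−p)²δ²‖x' − x‖² + 2p²σ². -/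
/-!
Write `D z ω = ∇f_ξ(z) - ∇f(z)` for the centred noise. The error of the estimator splits as
`(D x' - (1 - p) D x) + (1 - p)(g - ∇f x)`: a mean-zero random part plus a deterministic bias,
so its second moment is the second moment of the random part plus the squared bias. Writing the
random part as `(1 - p)(D x' - D x) + p D x'`, Hessian similarity bounds the first summand by
`(1 - p) δ ‖x' - x‖` almost surely and the variance bound controls the second.
-/

open MeasureTheory

section MeanSquare

variable {E : Type*} [NormedAddCommGroup E] [InnerProductSpace ℝ E]
  {Ω : Type*} [MeasurableSpace Ω] {P : Measure Ω}

theorem norm_sub_smul_sq_le (u v : E) (q : ℝ) :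
    ‖u - q • v‖ ^ 2 ≤ 2 * q ^ 2 * ‖u - v‖ ^ 2 + 2 * (1 - q) ^ 2 * ‖u‖ ^ 2 :=
  calc ‖u - q • v‖ ^ 2 = ‖q • (u - v) + (1 - q) • u‖ ^ 2 := by congr 2; module
    _ ≤ (‖q • (u - v)‖ + ‖(1 - q) • u‖) ^ 2 :=
        pow_le_pow_left₀ (norm_nonneg _) (norm_add_le _ _) 2
    _ ≤ 2 * (‖q • (u - v)‖ ^ 2 + ‖(1 - q) • u‖ ^ 2) := add_sq_le
    _ = 2 * q ^ 2 * ‖u - v‖ ^ 2 + 2 * (1 - q) ^ 2 * ‖u‖ ^ 2 := by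
        simp only [norm_smul, mul_pow, Real.norm_eq_abs, sq_abs]; ring

theorem norm_sub_smul_sq_le_of_norm_sub_le {u v : E} {c : ℝ} (h : ‖u - v‖ ≤ c) (q : ℝ) :
    ‖u - q • v‖ ^ 2 ≤ 2 * q ^ 2 * c ^ 2 + 2 * (1 - q) ^ 2 * ‖u‖ ^ 2 := by
  have := pow_le_pow_left₀ (norm_nonneg _) h 2
  linarith [norm_sub_smul_sq_le u v q, mul_le_mul_of_nonneg_left this
    (by positivity : (0 : ℝ) ≤ 2 * q ^ 2)]

theorem integral_norm_add_const_sq [CompleteSpace E] [IsProbabilityMeasure P] {A : Ω → E}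
    (hA : Integrable A P) (hA_mean : ∫ ω, A ω ∂P = 0)
    (hA_sq : Integrable (fun ω => ‖A ω‖ ^ 2) P) (b : E) :
    ∫ ω, ‖A ω + b‖ ^ 2 ∂P = ∫ ω, ‖A ω‖ ^ 2 ∂P + ‖b‖ ^ 2 := by
  have h_cross : ∫ ω, inner ℝ b (A ω) ∂P = 0 := by
    rw [integral_inner hA, hA_mean, inner_zero_right]
  have h_cross_int : Integrable (fun ω => 2 * inner ℝ b (A ω)) P :=
    (hA.const_inner b).const_mul 2
  simp_rw [norm_add_sq_real, real_inner_comm b]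
  rw [integral_add ?_ (integrable_const _), integral_add hA_sq h_cross_int, integral_const_mul,
    h_cross]
  · simp
  · exact hA_sq.add h_cross_int

variable {X Y : Ω → E} {c : ℝ}

theorem integrable_norm_sub_smul_sq_of_ae_norm_sub_le [IsFiniteMeasure P]
    (hX : AEStronglyMeasurable X P) (hY : AEStronglyMeasurable Y P)
    (hX_sq : Integrable (fun ω => ‖X ω‖ ^ 2) P) (hXY : ∀ᵐ ω ∂P, ‖X ω - Y ω‖ ≤ c)
    (q : ℝ) : Integrable (fun ω => ‖X ω - q • Y ω‖ ^ 2) P := by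
  refine ((integrable_const (2 * q ^ 2 * c ^ 2)).add (hX_sq.const_mul (2 * (1 - q) ^ 2))).mono'
    ((hX.sub (hY.const_smul q)).norm.pow 2) ?_
  filter_upwards [hXY] with ω hω
  rw [Real.norm_of_nonneg (sq_nonneg _)]
  exact norm_sub_smul_sq_le_of_norm_sub_le hω q

theorem integral_norm_sub_smul_sq_le_of_ae_norm_sub_le [IsProbabilityMeasure P]
    (hX : AEStronglyMeasurable X P) (hY : AEStronglyMeasurable Y P)
    (hX_sq : Integrable (fun ω => ‖X ω‖ ^ 2) P) (hXY : ∀ᵐ ω ∂P, ‖X ω - Y ω‖ ≤ c)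
    (q : ℝ) :
    ∫ ω, ‖X ω - q • Y ω‖ ^ 2 ∂P
      ≤ 2 * q ^ 2 * c ^ 2 + 2 * (1 - q) ^ 2 * ∫ ω, ‖X ω‖ ^ 2 ∂P := by
  have h_bound := (integrable_const (2 * q ^ 2 * c ^ 2)).add
    (hX_sq.const_mul (2 * (1 - q) ^ 2))
  calc ∫ ω, ‖X ω - q • Y ω‖ ^ 2 ∂P
      ≤ ∫ ω, (2 * q ^ 2 * c ^ 2 + 2 * (1 - q) ^ 2 * ‖X ω‖ ^ 2) ∂P := by
        refine integral_mono_ae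
          (integrable_norm_sub_smul_sq_of_ae_norm_sub_le hX hY hX_sq hXY q) h_bound ?_
        filter_upwards [hXY] with ω hω using norm_sub_smul_sq_le_of_norm_sub_le hω q
    _ = 2 * q ^ 2 * c ^ 2 + 2 * (1 - q) ^ 2 * ∫ ω, ‖X ω‖ ^ 2 ∂P := by
        rw [integral_add (integrable_const _) (hX_sq.const_mul _), integral_const,
          integral_const_mul]
        simp

theorem integral_norm_sub_smul_add_const_sq_le [CompleteSpace E] [IsProbabilityMeasure P]
    (hX : Integrable X P) (hY : Integrable Y P) (hX_mean : ∫ ω, X ω ∂P = 0)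
    (hY_mean : ∫ ω, Y ω ∂P = 0) (hX_sq : Integrable (fun ω => ‖X ω‖ ^ 2) P)
    (hXY : ∀ᵐ ω ∂P, ‖X ω - Y ω‖ ≤ c) (q : ℝ) (b : E) :
    ∫ ω, ‖X ω - q • Y ω + b‖ ^ 2 ∂P
      ≤ ‖b‖ ^ 2 + 2 * q ^ 2 * c ^ 2 + 2 * (1 - q) ^ 2 * ∫ ω, ‖X ω‖ ^ 2 ∂P := by
  have h_mean : ∫ ω, (X ω - q • Y ω) ∂P = 0 := by
    rw [integral_sub hX (by exact hY.smul q), integral_smul, hX_mean, hY_mean, smul_zero,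
      sub_zero]
  rw [integral_norm_add_const_sq (A := fun ω => X ω - q • Y ω) (hX.sub (hY.smul q)) h_mean
    (integrable_norm_sub_smul_sq_of_ae_norm_sub_le hX.1 hY.1 hX_sq hXY q) b]
  linarith [integral_norm_sub_smul_sq_le_of_ae_norm_sub_le hX.1 hY.1 hX_sq hXY q]

end MeanSquare

theorem mvr_estimator_variance_bound_general {d : ℕ}
    {Ω : Type*} [MeasurableSpace Ω] (P : Measure Ω) [IsProbabilityMeasure P]
    (f : EuclideanSpace ℝ (Fin d) → ℝ)
    (fξ : Ω → EuclideanSpace ℝ (Fin d) → ℝ)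
    (σ δ p : ℝ)
    (x x' g : EuclideanSpace ℝ (Fin d))
    (hunbiased : ∀ z, (∫ ω, gradient (fξ ω) z ∂P) = gradient f z)
    (hintz : ∀ z, Integrable (fun ω => gradient (fξ ω) z) P)
    (hvar : ∀ z, (∫ ω, ‖gradient (fξ ω) z - gradient f z‖ ^ 2 ∂P) ≤ σ ^ 2)
    (hvarint : ∀ z, Integrable (fun ω => ‖gradient (fξ ω) z - gradient f z‖ ^ 2) P)
    (hsim : ∀ᵐ ω ∂P, ∀ u v : EuclideanSpace ℝ (Fin d),
      ‖gradient (fξ ω) u - gradient f u - gradient (fξ ω) v + gradient f v‖ ≤ δ * ‖u - v‖) :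
    (∫ ω, ‖(gradient (fξ ω) x' + (1 - p) • (g - gradient (fξ ω) x)) - gradient f x'‖ ^ 2 ∂P)
      ≤ (1 - p) ^ 2 * ‖g - gradient f x‖ ^ 2
        + 2 * (1 - p) ^ 2 * δ ^ 2 * ‖x' - x‖ ^ 2 + 2 * p ^ 2 * σ ^ 2 := by
  have h_noise_int z : Integrable (fun ω => gradient (fξ ω) z - gradient f z) P :=
    (hintz z).sub (integrable_const _)
  have h_noise_mean z : ∫ ω, (gradient (fξ ω) z - gradient f z) ∂P = 0 := by
    rw [integral_sub (hintz z) (integrable_const _), hunbiased, integral_const]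
    simp
  have h_noise_diff : ∀ᵐ ω ∂P, ‖(gradient (fξ ω) x' - gradient f x')
      - (gradient (fξ ω) x - gradient f x)‖ ≤ δ * ‖x' - x‖ := by
    filter_upwards [hsim] with ω hω
    convert hω x' x using 2
    abel
  have h_split ω : gradient (fξ ω) x' + (1 - p) • (g - gradient (fξ ω) x) - gradient f x'
      = (gradient (fξ ω) x' - gradient f x') - (1 - p) • (gradient (fξ ω) x - gradient f x)
        + (1 - p) • (g - gradient f x) := by module
  simp_rw [h_split]
  have h_bound := integral_norm_sub_smul_add_const_sq_le (h_noise_int x') (h_noise_int x)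
    (h_noise_mean x') (h_noise_mean x) (hvarint x') h_noise_diff (1 - p)
    ((1 - p) • (g - gradient f x))
  rw [norm_smul, mul_pow, Real.norm_eq_abs, sq_abs] at h_bound
  nlinarith [hvar x']

theorem mvr_estimator_variance_bound {d : ℕ}
    {Ω : Type*} [MeasurableSpace Ω] (P : Measure Ω) [IsProbabilityMeasure P]
    (f : EuclideanSpace ℝ (Fin d) → ℝ)
    (fξ : Ω → EuclideanSpace ℝ (Fin d) → ℝ)
    (hf : Differentiable ℝ f) (hfξ : ∀ ω, Differentiable ℝ (fξ ω))
    (σ δ p : ℝ) (hσ : 0 ≤ σ) (hδ : 0 ≤ δ) (hp : p ∈ Set.Icc (0 : ℝ) 1)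
    (x x' g : EuclideanSpace ℝ (Fin d))
    (hunbiased : ∀ z, (∫ ω, gradient (fξ ω) z ∂P) = gradient f z)
    (hintz : ∀ z, Integrable (fun ω => gradient (fξ ω) z) P)
    (hvar : ∀ z, (∫ ω, ‖gradient (fξ ω) z - gradient f z‖ ^ 2 ∂P) ≤ σ ^ 2)
    (hvarint : ∀ z, Integrable (fun ω => ‖gradient (fξ ω) z - gradient f z‖ ^ 2) P)
    (hsim : ∀ᵐ ω ∂P, ∀ u v : EuclideanSpace ℝ (Fin d),
      ‖gradient (fξ ω) u - gradient f u - gradient (fξ ω) v + gradient f v‖ ≤ δ * ‖u - v‖)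
    (hint : Integrable (fun ω =>
      ‖(gradient (fξ ω) x' + (1 - p) • (g - gradient (fξ ω) x)) - gradient f x'‖ ^ 2) P) :
    (∫ ω, ‖(gradient (fξ ω) x' + (1 - p) • (g - gradient (fξ ω) x)) - gradient f x'‖ ^ 2 ∂P)
      ≤ (1 - p) ^ 2 * ‖g - gradient f x‖ ^ 2
        + 2 * (1 - p) ^ 2 * δ ^ 2 * ‖x' - x‖ ^ 2 + 2 * p ^ 2 * σ ^ 2 :=
  mvr_estimator_variance_bound_general P f fξ σ δ p x x' g hunbiased hintz hvar hvarint hsim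
end
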